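/- Let A ⊆ B be an extension where B is a right comodule algebra over a k-bialgebra H with A = B^{co H}, and suppose the Galois map B ⊗_A B → B ⊗ H, a ⊗ b ↦ a b₍₀₎ ⊗ b₍₁₎, is bijective with A = k. If additionally B is faithfully flat over k, then H admits an antipode, i.e. the identity map of H is convolution invertible, so H is a Hopf algebra. -/
import Mathlib


open TensorProduct LinearMap

set_option maxHeartbeats 1000000
set_option synthInstance.maxHeartbeats 400000

noncomputable section

variable {k : Type*} [CommRing k]

/-- The Galois map `B ⊗ B → B ⊗ H`, `a ⊗ b ↦ (a ⊗ 1) · ρ(b) = a b₍₀₎ ⊗ b₍₁₎`. -/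
def galoisMap {B H : Type*} [Ring B] [Algebra k B] [Ring H] [Algebra k H]
    (ρ : B →ₗ[k] B ⊗[k] H) : B ⊗[k] B →ₗ[k] B ⊗[k] H :=
  LinearMap.mul' k (B ⊗[k] H) ∘ₗ
    TensorProduct.map Algebra.TensorProduct.includeLeft.toLinearMap ρ


lemma galoisMap_tmul {B H : Type*} [Ring B] [Algebra k B] [Ring H] [Algebra k H]
    (ρ : B →ₗ[k] B ⊗[k] H) (a b : B) :
    galoisMap ρ (a ⊗ₜ[k] b) = (a ⊗ₜ[k] (1 : H)) * ρ b := by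
  simp [galoisMap, LinearMap.mul'_apply]

lemma bij_of_lTensor_bij {M N N' : Type*} [AddCommGroup M] [Module k M]
    [Module.FaithfullyFlat k M] [AddCommGroup N] [Module k N] [AddCommGroup N'] [Module k N']
    (f : N →ₗ[k] N') (h : Function.Bijective (LinearMap.lTensor M f)) :
    Function.Bijective f := by
  constructor
  · have hex : Function.Exact ((0 : N →ₗ[k] N).lTensor M) (f.lTensor M) := by
      rw [LinearMap.exact_iff]
      rw [LinearMap.lTensor_zero, LinearMap.range_zero, LinearMap.ker_eq_bot]
      exact h.1
    have := Module.FaithfullyFlat.lTensor_reflects_exact k M (0 : N →ₗ[k] N) f hex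
    rw [LinearMap.exact_iff, LinearMap.range_zero, LinearMap.ker_eq_bot] at this
    exact this
  · have hex : Function.Exact (f.lTensor M) ((0 : N' →ₗ[k] N').lTensor M) := by
      rw [LinearMap.exact_iff]
      rw [LinearMap.lTensor_zero, LinearMap.ker_zero, eq_comm, LinearMap.range_eq_top]
      exact h.2
    have := Module.FaithfullyFlat.lTensor_reflects_exact k M f (0 : N' →ₗ[k] N') hex
    rw [LinearMap.exact_iff, LinearMap.ker_zero, eq_comm, LinearMap.range_eq_top] at this
    exact this

lemma assoc_mul_tmul {B H : Type*} [Ring B] [Algebra k B] [Ring H] [Algebra k H]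
    (u v : B ⊗[k] H) (q : H) :
    (TensorProduct.assoc k B H H) ((u * v) ⊗ₜ[k] q) =
      (TensorProduct.assoc k B H H) (u ⊗ₜ[k] (1 : H)) *
        (TensorProduct.assoc k B H H) (v ⊗ₜ[k] q) := by
  induction u using TensorProduct.induction_on with
  | zero => simp only [zero_mul, zero_tmul, LinearEquiv.map_zero, zero_mul]
  | tmul b1 h1 =>
    induction v using TensorProduct.induction_on with
    | zero => simp only [mul_zero, zero_tmul, LinearEquiv.map_zero, mul_zero]
    | tmul b2 h2 => simp [Algebra.TensorProduct.tmul_mul_tmul]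
    | add x y hx hy => simp only [mul_add, add_tmul, LinearEquiv.map_add, hx, hy]
  | add x y hx hy => simp only [add_mul, add_tmul, LinearEquiv.map_add, hx, hy, add_mul]

lemma lTensor_T_bij {B H : Type*} [Ring B] [Algebra k B] [Ring H] [Bialgebra k H]
    (ρ : B →ₗ[k] B ⊗[k] H)
    (hcoassoc : (TensorProduct.assoc k B H H).toLinearMap ∘ₗ LinearMap.rTensor H ρ ∘ₗ ρ =
      LinearMap.lTensor B (Coalgebra.comul (R := k)) ∘ₗ ρ)
    (hmul : ∀ a b : B, ρ (a * b) = ρ a * ρ b)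
    (hgal : Function.Bijective (galoisMap ρ)) :
    Function.Bijective
      (LinearMap.lTensor B (galoisMap (Coalgebra.comul (R := k) (A := H)))) := by
  set T := galoisMap (Coalgebra.comul (R := k) (A := H)) with hT
  let β : B ⊗[k] B ≃ₗ[k] B ⊗[k] H := LinearEquiv.ofBijective _ hgal
  let m2 : B ⊗[k] (B ⊗[k] H) ≃ₗ[k] B ⊗[k] (H ⊗[k] H) :=
    (TensorProduct.assoc k B B H).symm ≪≫ₗ (LinearEquiv.rTensor H β) ≪≫ₗ
      TensorProduct.assoc k B H H
  let ψ : B ⊗[k] (B ⊗[k] B) ≃ₗ[k] B ⊗[k] (H ⊗[k] H) := (LinearEquiv.lTensor B β) ≪≫ₗ m2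
  let b12 : B ⊗[k] (B ⊗[k] B) ≃ₗ[k] B ⊗[k] (H ⊗[k] B) :=
    (TensorProduct.assoc k B B B).symm ≪≫ₗ (LinearEquiv.rTensor B β) ≪≫ₗ
      TensorProduct.assoc k B H B
  let χ : B ⊗[k] (B ⊗[k] B) ≃ₗ[k] B ⊗[k] (H ⊗[k] H) :=
    b12 ≪≫ₗ (LinearEquiv.lTensor B (TensorProduct.comm k H B)) ≪≫ₗ m2
      ≪≫ₗ (LinearEquiv.lTensor B (TensorProduct.comm k H H))
  have hβ : ∀ p q : B, β (p ⊗ₜ[k] q) = (p ⊗ₜ[k] (1:H)) * ρ q := by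
    intro p q
    show galoisMap ρ (p ⊗ₜ[k] q) = _
    exact galoisMap_tmul ρ p q
  have hm2 : ∀ (a p : B) (h : H), m2 (a ⊗ₜ[k] (p ⊗ₜ[k] h)) =
      (TensorProduct.assoc k B H H) (((a ⊗ₜ[k] (1:H)) * ρ p) ⊗ₜ[k] h) := by
    intro a p h
    show (TensorProduct.assoc k B H H)
      ((LinearEquiv.rTensor H β) ((TensorProduct.assoc k B B H).symm (a ⊗ₜ[k] (p ⊗ₜ[k] h)))) = _
    rw [TensorProduct.assoc_symm_tmul, LinearEquiv.rTensor_tmul, hβ]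
  have key : LinearMap.lTensor B T ∘ₗ (χ : B ⊗[k] (B ⊗[k] B) →ₗ[k] B ⊗[k] (H ⊗[k] H))
      = (ψ : B ⊗[k] (B ⊗[k] B) →ₗ[k] B ⊗[k] (H ⊗[k] H)) := by
    ext a b c
    obtain ⟨sb, hsb⟩ := TensorProduct.exists_finset (ρ b)
    obtain ⟨sc, hsc⟩ := TensorProduct.exists_finset (ρ c)
    have hb1 : ∀ a' : B, (a' ⊗ₜ[k] (1:H)) * ρ b = ∑ i ∈ sb, (a' * i.1) ⊗ₜ[k] i.2 := by
      intro a'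
      rw [hsb, Finset.mul_sum]
      simp [Algebra.TensorProduct.tmul_mul_tmul]
    have hc1 : ∀ a' : B, (a' ⊗ₜ[k] (1:H)) * ρ c = ∑ j ∈ sc, (a' * j.1) ⊗ₜ[k] j.2 := by
      intro a'
      rw [hsc, Finset.mul_sum]
      simp [Algebra.TensorProduct.tmul_mul_tmul]
    -- the ψ side
    have hψ : ψ (a ⊗ₜ[k] (b ⊗ₜ[k] c)) =
        (TensorProduct.assoc k B H H) (((a ⊗ₜ[k] (1:H)) * ρ b) ⊗ₜ[k] (1:H)) *
          (LinearMap.lTensor B (Coalgebra.comul (R := k)) (ρ c)) := by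
      have e1 : ψ (a ⊗ₜ[k] (b ⊗ₜ[k] c)) = m2 (a ⊗ₜ[k] ((b ⊗ₜ[k] (1:H)) * ρ c)) := by
        show m2 ((LinearEquiv.lTensor B β) (a ⊗ₜ[k] (b ⊗ₜ[k] c))) = _
        rw [LinearEquiv.lTensor_tmul, hβ]
      rw [e1, hc1, tmul_sum, map_sum]
      have e2 : ∀ j ∈ sc, m2 (a ⊗ₜ[k] ((b * j.1) ⊗ₜ[k] j.2)) =
          (TensorProduct.assoc k B H H) (((a ⊗ₜ[k] (1:H)) * ρ b) ⊗ₜ[k] (1:H)) *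
            (TensorProduct.assoc k B H H) ((ρ j.1) ⊗ₜ[k] j.2) := by
        intro j _
        rw [hm2, hmul, ← mul_assoc, assoc_mul_tmul]
      rw [Finset.sum_congr rfl e2, ← Finset.mul_sum]
      congr 1
      have e3 : ∑ j ∈ sc, (TensorProduct.assoc k B H H) ((ρ j.1) ⊗ₜ[k] j.2) =
          (TensorProduct.assoc k B H H) (LinearMap.rTensor H ρ (ρ c)) := by
        conv_rhs => rw [hsc]
        rw [map_sum, map_sum]
        simp [LinearMap.rTensor_tmul]
      rw [e3]
      have := LinearMap.congr_fun hcoassoc c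
      simpa [LinearMap.comp_apply] using this
    -- the χ side
    have hχ : LinearMap.lTensor B T (χ (a ⊗ₜ[k] (b ⊗ₜ[k] c))) =
        ∑ i ∈ sb, ∑ j ∈ sc, (a * i.1 * j.1) ⊗ₜ[k]
          ((i.2 ⊗ₜ[k] (1:H)) * Coalgebra.comul (R := k) j.2) := by
      have e1 : b12 (a ⊗ₜ[k] (b ⊗ₜ[k] c)) = ∑ i ∈ sb, (a * i.1) ⊗ₜ[k] (i.2 ⊗ₜ[k] c) := by
        show (TensorProduct.assoc k B H B)
          ((LinearEquiv.rTensor B β) ((TensorProduct.assoc k B B B).symm (a ⊗ₜ[k] (b ⊗ₜ[k] c)))) = _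
        rw [TensorProduct.assoc_symm_tmul, LinearEquiv.rTensor_tmul, hβ, hb1, sum_tmul, map_sum]
        exact Finset.sum_congr rfl (fun i _ => by rw [TensorProduct.assoc_tmul])
      have e2 : χ (a ⊗ₜ[k] (b ⊗ₜ[k] c)) =
          ∑ i ∈ sb, ∑ j ∈ sc, (a * i.1 * j.1) ⊗ₜ[k] (i.2 ⊗ₜ[k] j.2) := by
        show (LinearEquiv.lTensor B (TensorProduct.comm k H H))
            (m2 ((LinearEquiv.lTensor B (TensorProduct.comm k H B))
              (b12 (a ⊗ₜ[k] (b ⊗ₜ[k] c))))) = _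
        rw [e1, map_sum, map_sum, map_sum]
        refine Finset.sum_congr rfl (fun i _ => ?_)
        rw [LinearEquiv.lTensor_tmul, TensorProduct.comm_tmul, hm2, hc1, sum_tmul, map_sum,
          map_sum]
        refine Finset.sum_congr rfl (fun j _ => ?_)
        rw [TensorProduct.assoc_tmul, LinearEquiv.lTensor_tmul, TensorProduct.comm_tmul]
      rw [e2, map_sum]
      refine Finset.sum_congr rfl (fun i _ => ?_)
      rw [map_sum]
      refine Finset.sum_congr rfl (fun j _ => ?_)
      rw [LinearMap.lTensor_tmul, hT, galoisMap_tmul]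
    -- compare
    show LinearMap.lTensor B T (χ (a ⊗ₜ[k] (b ⊗ₜ[k] c))) = ψ (a ⊗ₜ[k] (b ⊗ₜ[k] c))
    rw [hχ, hψ, hb1]
    conv_rhs => rw [hsc]
    rw [map_sum, sum_tmul, map_sum, Finset.sum_mul_sum]
    refine Finset.sum_congr rfl (fun i _ => Finset.sum_congr rfl (fun j _ => ?_))
    rw [TensorProduct.assoc_tmul, LinearMap.lTensor_tmul,
      Algebra.TensorProduct.tmul_mul_tmul, mul_assoc]
  have hfun : ⇑(LinearMap.lTensor B T) ∘ ⇑χ = ⇑ψ := by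
    funext x
    exact LinearMap.congr_fun key x
  have hb : Function.Bijective (⇑(LinearMap.lTensor B T) ∘ ⇑χ) := hfun ▸ ψ.bijective
  exact (Function.Bijective.of_comp_iff _ χ.bijective).mp hb

lemma antipode_of_galois_bij {H : Type*} [Ring H] [Bialgebra k H]
    (hT : Function.Bijective (galoisMap (Coalgebra.comul (R := k) (A := H)))) :
    ∃ S : H →ₗ[k] H,
      LinearMap.mul' k H ∘ₗ LinearMap.rTensor H S ∘ₗ Coalgebra.comul (R := k) =
        (Algebra.linearMap k H) ∘ₗ Coalgebra.counit (R := k) ∧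
      LinearMap.mul' k H ∘ₗ LinearMap.lTensor H S ∘ₗ Coalgebra.comul (R := k) =
        (Algebra.linearMap k H) ∘ₗ Coalgebra.counit (R := k) := by
  set T : H ⊗[k] H →ₗ[k] H ⊗[k] H := galoisMap (Coalgebra.comul (R := k) (A := H)) with hTdef
  let E : H ⊗[k] H ≃ₗ[k] H ⊗[k] H := LinearEquiv.ofBijective T hT
  let u : H →ₗ[k] H ⊗[k] H := E.symm.toLinearMap ∘ₗ TensorProduct.mk k H H 1
  let r : H ⊗[k] k →ₗ[k] H := (TensorProduct.rid k H).toLinearMap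
  let S : H →ₗ[k] H := (r ∘ₗ LinearMap.lTensor H (Coalgebra.counit (R := k))) ∘ₗ u
  let Θ : H ⊗[k] H →ₗ[k] (H ⊗[k] H) ⊗[k] H :=
    (TensorProduct.assoc k H H H).symm.toLinearMap ∘ₗ
      LinearMap.lTensor H (Coalgebra.comul (R := k))
  have hTapp : ∀ p q : H, T (p ⊗ₜ[k] q) = (p ⊗ₜ[k] (1:H)) * Coalgebra.comul (R := k) q :=
    fun p q => galoisMap_tmul _ p q
  have hTE : ∀ x, T x = E x := fun x => rfl
  have hTu : ∀ h : H, T (u h) = (1:H) ⊗ₜ[k] h := by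
    intro h
    show T (E.symm ((1:H) ⊗ₜ[k] h)) = (1:H) ⊗ₜ[k] h
    rw [hTE]
    exact E.apply_symm_apply _
  have huh : ∀ h : H, u h = E.symm ((1:H) ⊗ₜ[k] h) := fun h => rfl
  -- counit facts
  have hcounit1 : ∀ h : H, r (LinearMap.lTensor H (Coalgebra.counit (R := k))
      (Coalgebra.comul (R := k) h)) = h := by
    intro h
    rw [show LinearMap.lTensor H (Coalgebra.counit (R := k)) (Coalgebra.comul (R := k) h)
        = h ⊗ₜ[k] (1:k) from Coalgebra.lTensor_counit_comul h]
    simp [r]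
  -- I0 : r ∘ lTensor ε ∘ T = mul'
  have h0 : ∀ (g : H) (y : H ⊗[k] H),
      r (LinearMap.lTensor H (Coalgebra.counit (R := k)) ((g ⊗ₜ[k] (1:H)) * y)) =
        g * r (LinearMap.lTensor H (Coalgebra.counit (R := k)) y) := by
    intro g y
    induction y using TensorProduct.induction_on with
    | zero => simp
    | tmul p q =>
      simp [r, Algebra.TensorProduct.tmul_mul_tmul, TensorProduct.rid_tmul, mul_smul_comm]
    | add y z hy hz => simp only [mul_add, map_add, hy, hz]
  have hI0 : ∀ x : H ⊗[k] H,
      r (LinearMap.lTensor H (Coalgebra.counit (R := k)) (T x)) = LinearMap.mul' k H x := by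
    intro x
    induction x using TensorProduct.induction_on with
    | zero => simp
    | tmul g h => rw [hTapp, h0, hcounit1, LinearMap.mul'_apply]
    | add y z hy hz => simp only [map_add, hy, hz]
  -- I1 : mul' ∘ u = unit ∘ counit
  have hI1 : ∀ h : H, LinearMap.mul' k H (u h) = algebraMap k H (Coalgebra.counit (R := k) h) := by
    intro h
    rw [← hI0, hTu]
    simp [r, TensorProduct.rid_tmul, Algebra.algebraMap_eq_smul_one]
  -- Θ facts
  have hΘapp : ∀ p q : H, Θ (p ⊗ₜ[k] q) =
      (TensorProduct.assoc k H H H).symm (p ⊗ₜ[k] Coalgebra.comul (R := k) q) := fun p q => rfl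
  have hassoc' : ∀ (g p : H) (y : H ⊗[k] H),
      (TensorProduct.assoc k H H H).symm ((g * p) ⊗ₜ[k] y) =
        ((g ⊗ₜ[k] (1:H)) ⊗ₜ[k] (1:H)) * (TensorProduct.assoc k H H H).symm (p ⊗ₜ[k] y) := by
    intro g p y
    induction y using TensorProduct.induction_on with
    | zero => simp
    | tmul q1 q2 =>
      simp [TensorProduct.assoc_symm_tmul, Algebra.TensorProduct.tmul_mul_tmul]
    | add y z hy hz => simp only [tmul_add, map_add, mul_add, hy, hz]
  have hΘmul : ∀ (g : H) (y : H ⊗[k] H),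
      Θ ((g ⊗ₜ[k] (1:H)) * y) = ((g ⊗ₜ[k] (1:H)) ⊗ₜ[k] (1:H)) * Θ y := by
    intro g y
    induction y using TensorProduct.induction_on with
    | zero => simp
    | tmul p q =>
      have : (g ⊗ₜ[k] (1:H)) * (p ⊗ₜ[k] q) = (g * p) ⊗ₜ[k] q := by
        simp [Algebra.TensorProduct.tmul_mul_tmul]
      rw [this, hΘapp, hΘapp, hassoc']
    | add y z hy hz => simp only [mul_add, map_add, hy, hz]
  have hΘΔ : ∀ h : H, Θ (Coalgebra.comul (R := k) h) =
      LinearMap.rTensor H (Coalgebra.comul (R := k)) (Coalgebra.comul (R := k) h) := by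
    intro h
    exact Coalgebra.coassoc_symm_apply h
  -- I2 : Θ ∘ T = rTensor T ∘ Θ
  have hR : ∀ (g : H) (y : H ⊗[k] H),
      LinearMap.rTensor H T ((TensorProduct.assoc k H H H).symm (g ⊗ₜ[k] y)) =
        ((g ⊗ₜ[k] (1:H)) ⊗ₜ[k] (1:H)) * LinearMap.rTensor H (Coalgebra.comul (R := k)) y := by
    intro g y
    induction y using TensorProduct.induction_on with
    | zero => simp
    | tmul p q =>
      rw [TensorProduct.assoc_symm_tmul, LinearMap.rTensor_tmul, LinearMap.rTensor_tmul,
        hTapp, Algebra.TensorProduct.tmul_mul_tmul, one_mul]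
    | add y z hy hz => simp only [tmul_add, map_add, mul_add, hy, hz]
  have hI2 : ∀ x : H ⊗[k] H, Θ (T x) = LinearMap.rTensor H T (Θ x) := by
    intro x
    induction x using TensorProduct.induction_on with
    | zero => simp
    | tmul g h =>
      rw [hTapp, hΘmul, hΘapp, hR, hΘΔ]
    | add y z hy hz => simp only [map_add, hy, hz]
  -- transfer to E.symm
  have hTinv : ∀ z, LinearMap.rTensor H (E.symm.toLinearMap) (LinearMap.rTensor H T z) = z := by
    intro z
    rw [← LinearMap.rTensor_comp_apply]
    have : E.symm.toLinearMap ∘ₗ T = LinearMap.id := by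
      apply LinearMap.ext
      intro w
      simp only [LinearMap.comp_apply, LinearMap.id_apply]
      rw [hTE]
      exact E.symm_apply_apply w
    rw [this, LinearMap.rTensor_id, LinearMap.id_apply]
  have hE2 : ∀ x, Θ (E.symm x) = LinearMap.rTensor H E.symm.toLinearMap (Θ x) := by
    intro x
    have h1 : Θ x = LinearMap.rTensor H T (Θ (E.symm x)) := by
      conv_lhs => rw [show x = T (E.symm x) from by rw [hTE]; exact (E.apply_symm_apply x).symm]
      exact hI2 (E.symm x)
    rw [h1, hTinv]
  -- I3 : Θ ∘ u = rTensor u ∘ comul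
  have hL1 : ∀ y : H ⊗[k] H, (TensorProduct.assoc k H H H).symm ((1:H) ⊗ₜ[k] y) =
      LinearMap.rTensor H (TensorProduct.mk k H H 1) y := by
    intro y
    induction y using TensorProduct.induction_on with
    | zero => simp
    | tmul p q => simp [TensorProduct.assoc_symm_tmul]
    | add y z hy hz => simp only [tmul_add, map_add, hy, hz]
  have hΘu : ∀ h : H, Θ (u h) =
      LinearMap.rTensor H u (Coalgebra.comul (R := k) h) := by
    intro h
    rw [huh, hE2, hΘapp, hL1, ← LinearMap.rTensor_comp_apply]
  -- first (left) antipode identity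
  have hI4 : ∀ x : H ⊗[k] H,
      LinearMap.mul' k H (LinearMap.rTensor H (r ∘ₗ LinearMap.lTensor H (Coalgebra.counit (R := k))) (Θ x)) =
        LinearMap.mul' k H x := by
    have hF : ∀ (g : H) (y : H ⊗[k] H),
        LinearMap.mul' k H (LinearMap.rTensor H (r ∘ₗ LinearMap.lTensor H (Coalgebra.counit (R := k)))
          ((TensorProduct.assoc k H H H).symm (g ⊗ₜ[k] y))) =
          g * (TensorProduct.lid k H) (LinearMap.rTensor H (Coalgebra.counit (R := k)) y) := by
      intro g y
      induction y using TensorProduct.induction_on with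
      | zero => simp
      | tmul p q =>
        rw [TensorProduct.assoc_symm_tmul, LinearMap.rTensor_tmul, LinearMap.rTensor_tmul]
        simp [r, TensorProduct.rid_tmul, TensorProduct.lid_tmul, LinearMap.mul'_apply,
          mul_smul_comm, smul_mul_assoc]
      | add y z hy hz => simp only [tmul_add, map_add, mul_add, hy, hz]
    intro x
    induction x using TensorProduct.induction_on with
    | zero => simp
    | tmul g h =>
      rw [hΘapp, hF, show LinearMap.rTensor H (Coalgebra.counit (R := k))
          (Coalgebra.comul (R := k) h) = (1:k) ⊗ₜ[k] h from Coalgebra.rTensor_counit_comul h]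
      simp [TensorProduct.lid_tmul, LinearMap.mul'_apply]
    | add y z hy hz => simp only [map_add, hy, hz]
  have LI : LinearMap.mul' k H ∘ₗ LinearMap.rTensor H S ∘ₗ Coalgebra.comul (R := k) =
      (Algebra.linearMap k H) ∘ₗ Coalgebra.counit (R := k) := by
    apply LinearMap.ext
    intro h
    simp only [LinearMap.comp_apply]
    have e1 : LinearMap.rTensor H S (Coalgebra.comul (R := k) h) =
        LinearMap.rTensor H (r ∘ₗ LinearMap.lTensor H (Coalgebra.counit (R := k))) (Θ (u h)) := by
      rw [hΘu, ← LinearMap.rTensor_comp_apply]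
    rw [e1, hI4, hI1]
    rfl
  -- C : T ∘ rTensor S ∘ comul = mk 1
  have hW : ∀ (p : H) (y : H ⊗[k] H),
      LinearMap.rTensor H (LinearMap.mul' k H ∘ₗ LinearMap.rTensor H S)
          ((TensorProduct.assoc k H H H).symm (p ⊗ₜ[k] y)) = (S p ⊗ₜ[k] (1:H)) * y := by
    intro p y
    induction y using TensorProduct.induction_on with
    | zero => simp
    | tmul q1 q2 =>
      rw [TensorProduct.assoc_symm_tmul, LinearMap.rTensor_tmul, LinearMap.comp_apply,
        LinearMap.rTensor_tmul, LinearMap.mul'_apply, Algebra.TensorProduct.tmul_mul_tmul, one_mul]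
    | add y z hy hz => simp only [tmul_add, map_add, mul_add, hy, hz]
  have hC1 : ∀ x : H ⊗[k] H, T (LinearMap.rTensor H S x) =
      LinearMap.rTensor H (LinearMap.mul' k H ∘ₗ LinearMap.rTensor H S) (Θ x) := by
    intro x
    induction x using TensorProduct.induction_on with
    | zero => simp
    | tmul p q => rw [LinearMap.rTensor_tmul, hTapp, hΘapp, hW]
    | add y z hy hz => simp only [map_add, hy, hz]
  have hC : ∀ h : H, T (LinearMap.rTensor H S (Coalgebra.comul (R := k) h)) = (1:H) ⊗ₜ[k] h := by
    intro h
    rw [hC1, hΘΔ, ← LinearMap.rTensor_comp_apply]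
    have : (LinearMap.mul' k H ∘ₗ LinearMap.rTensor H S) ∘ₗ Coalgebra.comul (R := k) =
        (Algebra.linearMap k H) ∘ₗ Coalgebra.counit (R := k) := by
      rw [LinearMap.comp_assoc]
      exact LI
    rw [this, LinearMap.rTensor_comp_apply,
      show LinearMap.rTensor H (Coalgebra.counit (R := k)) (Coalgebra.comul (R := k) h)
        = (1:k) ⊗ₜ[k] h from Coalgebra.rTensor_counit_comul h]
    rw [LinearMap.rTensor_tmul]
    simp
  -- the map v and right antipode identity
  set v : H ⊗[k] H →ₗ[k] H ⊗[k] H :=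
    LinearMap.rTensor H (LinearMap.mul' k H) ∘ₗ (TensorProduct.assoc k H H H).symm.toLinearMap ∘ₗ
      LinearMap.lTensor H (LinearMap.rTensor H S ∘ₗ Coalgebra.comul (R := k)) with hvdef
  have hvapp : ∀ g h : H, v (g ⊗ₜ[k] h) = LinearMap.rTensor H (LinearMap.mul' k H)
      ((TensorProduct.assoc k H H H).symm (g ⊗ₜ[k]
        (LinearMap.rTensor H S (Coalgebra.comul (R := k) h)))) := fun g h => rfl
  have hV : ∀ (g : H) (y : H ⊗[k] H),
      T (LinearMap.rTensor H (LinearMap.mul' k H) ((TensorProduct.assoc k H H H).symm (g ⊗ₜ[k] y))) =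
        (g ⊗ₜ[k] (1:H)) * T y := by
    intro g y
    induction y using TensorProduct.induction_on with
    | zero => simp
    | tmul p q =>
      rw [TensorProduct.assoc_symm_tmul, LinearMap.rTensor_tmul, LinearMap.mul'_apply,
        hTapp, hTapp, ← mul_assoc, Algebra.TensorProduct.tmul_mul_tmul, one_mul]
    | add y z hy hz => simp only [tmul_add, map_add, mul_add, hy, hz]
  have hR1 : ∀ x : H ⊗[k] H, T (v x) = x := by
    intro x
    induction x using TensorProduct.induction_on with
    | zero => simp
    | tmul g h =>
      rw [hvapp, hV, hC, Algebra.TensorProduct.tmul_mul_tmul, mul_one, one_mul]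
    | add y z hy hz => simp only [map_add, hy, hz]
  have hvT : ∀ y : H ⊗[k] H, v (T y) = y := by
    intro y
    have h1 : v (T y) = E.symm (T (v (T y))) := by
      rw [hTE (v (T y))]
      exact (E.symm_apply_apply _).symm
    rw [h1, hR1, hTE, E.symm_apply_apply]
  have hN : ∀ (g : H) (y : H ⊗[k] H),
      r (LinearMap.lTensor H (Coalgebra.counit (R := k)) (LinearMap.rTensor H (LinearMap.mul' k H)
        ((TensorProduct.assoc k H H H).symm (g ⊗ₜ[k] (LinearMap.rTensor H S y))))) =
        g * S (r (LinearMap.lTensor H (Coalgebra.counit (R := k)) y)) := by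
    intro g y
    induction y using TensorProduct.induction_on with
    | zero => simp
    | tmul p q =>
      rw [LinearMap.rTensor_tmul, TensorProduct.assoc_symm_tmul, LinearMap.rTensor_tmul,
        LinearMap.mul'_apply, LinearMap.lTensor_tmul, LinearMap.lTensor_tmul]
      simp [r, TensorProduct.rid_tmul, map_smul, mul_smul_comm]
    | add y z hy hz => simp only [map_add, tmul_add, hy, hz, mul_add]
  have hR3 : ∀ x : H ⊗[k] H,
      r (LinearMap.lTensor H (Coalgebra.counit (R := k)) (v x)) =
        LinearMap.mul' k H (LinearMap.lTensor H S x) := by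
    intro x
    induction x using TensorProduct.induction_on with
    | zero => simp
    | tmul g h =>
      rw [hvapp, hN, hcounit1, LinearMap.lTensor_tmul, LinearMap.mul'_apply]
    | add y z hy hz => simp only [map_add, hy, hz]
  have hTone : ∀ h : H, T ((1:H) ⊗ₜ[k] h) = Coalgebra.comul (R := k) h := by
    intro h
    rw [hTapp, show ((1:H) ⊗ₜ[k] (1:H) : H ⊗[k] H) = 1 from rfl, one_mul]
  refine ⟨S, LI, ?_⟩
  apply LinearMap.ext
  intro h
  simp only [LinearMap.comp_apply]
  rw [← hTone, ← hR3, hvT]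
  rw [LinearMap.lTensor_tmul]
  simp [r, TensorProduct.rid_tmul, Algebra.algebraMap_eq_smul_one]

/-- Schauenburg-type theorem: if `H` is a `k`-bialgebra and `B` a faithfully flat right
`H`-comodule algebra with coinvariants exactly `k` whose Galois map
`B ⊗ B → B ⊗ H`, `a ⊗ b ↦ a b₍₀₎ ⊗ b₍₁₎`, is bijective, then the identity of `H` is
convolution invertible, i.e. `H` admits an antipode and hence is a Hopf algebra. -/
theorem stmt18 {B H : Type*} [Ring B] [Algebra k B] [Ring H] [Bialgebra k H]
    [Module.FaithfullyFlat k B]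
    (ρ : B →ₗ[k] B ⊗[k] H)
    -- ρ is a coassociative counital coaction
    (hcoassoc : (TensorProduct.assoc k B H H).toLinearMap ∘ₗ LinearMap.rTensor H ρ ∘ₗ ρ =
      LinearMap.lTensor B (Coalgebra.comul (R := k)) ∘ₗ ρ)
    (hcounit : (TensorProduct.rid k B).toLinearMap ∘ₗ
      LinearMap.lTensor B (Coalgebra.counit (R := k)) ∘ₗ ρ = LinearMap.id)
    -- B is a comodule algebra
    (hmul : ∀ a b : B, ρ (a * b) = ρ a * ρ b) (hone : ρ 1 = 1)
    -- the coinvariants are exactly k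
    (hcoinv : ∀ b : B, ρ b = b ⊗ₜ (1 : H) ↔ ∃ c : k, b = algebraMap k B c)
    -- the Galois map is bijective
    (hgal : Function.Bijective (galoisMap ρ)) :
    ∃ S : H →ₗ[k] H,
      LinearMap.mul' k H ∘ₗ LinearMap.rTensor H S ∘ₗ Coalgebra.comul (R := k) =
        (Algebra.linearMap k H) ∘ₗ Coalgebra.counit (R := k) ∧
      LinearMap.mul' k H ∘ₗ LinearMap.lTensor H S ∘ₗ Coalgebra.comul (R := k) =
        (Algebra.linearMap k H) ∘ₗ Coalgebra.counit (R := k) := by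
  exact antipode_of_galois_bij (bij_of_lTensor_bij (M := B) _ (lTensor_T_bij ρ hcoassoc hmul hgal))

end
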